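/- arXiv:2106.13759 — 2 statements merged into one kernel-verified Lean document; each statement's English description precedes it below -/
import Mathlib

section
/- Let a be a root of unity in ℂ, and set b = −a and c = −a⁻². Then |a² + b² + c²|² = 5 + 2(a⁶ + a⁻⁶), and this quantity is an integer if and only if a²⁴ = 1 or a³⁶ = 1 (equivalently, the multiplicative order of a⁶ divides 4 or divides 6). -/
/-!
Since `‖a‖ = 1`, conjugation inverts `a`, so `a² + b² + c² = 2a² + a⁻⁴` has squared norm
`(2a² + a⁻⁴)(2a⁻² + a⁴) = 5 + 2(z + z⁻¹)` with `z = a⁶`. The number `z + z⁻¹` is an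
algebraic integer of absolute value at most `2`, so it is rational only if it is an integer
`k ∈ [-2, 2]`; then `z` is a root of `X² - kX + 1`, which divides `X⁴ - 1` or `X⁶ - 1`.
-/

theorem exists_int_abs_le_two_sq_add_one_eq_mul_iff {R : Type*} [CommRing R] [NoZeroDivisors R]
    (z : R) : (∃ k : ℤ, |k| ≤ 2 ∧ z ^ 2 + 1 = k * z) ↔ z ^ 4 = 1 ∨ z ^ 6 = 1 := by
  constructor
  · rintro ⟨k, hk, h⟩
    obtain ⟨hk₁, hk₂⟩ := abs_le.mp hk
    interval_cases k <;> push_cast at h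
    · have hz : z + 1 = 0 := pow_eq_zero_iff two_ne_zero |>.mp (by linear_combination h)
      exact .inl (by linear_combination (z ^ 3 - z ^ 2 + z - 1) * hz)
    · exact .inr (by linear_combination (z ^ 4 - z ^ 3 + z - 1) * h)
    · exact .inl (by linear_combination (z ^ 2 - 1) * h)
    · exact .inr (by linear_combination (z ^ 4 + z ^ 3 - z - 1) * h)
    · have hz : z - 1 = 0 := pow_eq_zero_iff two_ne_zero |>.mp (by linear_combination h)
      exact .inl (by linear_combination (z ^ 3 + z ^ 2 + z + 1) * hz)
  · rintro (h | h)
    · have : (z - 1) * (z + 1) * (z ^ 2 + 1) = 0 := by linear_combination h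
      rcases mul_eq_zero.mp this with h | h
      · rcases mul_eq_zero.mp h with h | h
        · exact ⟨2, by norm_num, by push_cast; linear_combination (z - 1) * h⟩
        · exact ⟨-2, by norm_num, by push_cast; linear_combination (z + 1) * h⟩
      · exact ⟨0, by norm_num, by push_cast; linear_combination h⟩
    · have : (z - 1) * (z + 1) * (z ^ 2 + z + 1) * (z ^ 2 - z + 1) = 0 := by
        linear_combination h
      rcases mul_eq_zero.mp this with h | h
      · rcases mul_eq_zero.mp h with h | h
        · rcases mul_eq_zero.mp h with h | h
          · exact ⟨2, by norm_num, by push_cast; linear_combination (z - 1) * h⟩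
          · exact ⟨-2, by norm_num, by push_cast; linear_combination (z + 1) * h⟩
        · exact ⟨-1, by norm_num, by push_cast; linear_combination h⟩
      · exact ⟨1, by norm_num, by push_cast; linear_combination h⟩

theorem isIntegral_add_inv_of_pow_eq_one {K : Type*} [Field K] {z : K} {n : ℕ} (hn : 0 < n)
    (hz : z ^ n = 1) : IsIntegral ℤ (z + z⁻¹) :=
  (IsIntegral.of_pow hn (hz ▸ isIntegral_one)).add
    (IsIntegral.of_pow hn (by rw [inv_pow, hz, inv_one]; exact isIntegral_one))

namespace Complex

theorem exists_int_eq_add_inv_iff {z : ℂ} {n : ℕ} (hn : 0 < n) (hz : z ^ n = 1) :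
    (∃ k : ℤ, z + z⁻¹ = k) ↔ z ^ 4 = 1 ∨ z ^ 6 = 1 := by
  have hnorm : ‖z‖ = 1 := norm_eq_one_of_pow_eq_one hz hn.ne'
  have hz₀ : z ≠ 0 := norm_ne_zero_iff.mp (by simp [hnorm])
  rw [← exists_int_abs_le_two_sq_add_one_eq_mul_iff]
  constructor
  · rintro ⟨k, hk⟩
    have hbound : ‖(k : ℂ)‖ ≤ 2 := by
      calc ‖(k : ℂ)‖ = ‖z + z⁻¹‖ := by rw [hk]
        _ ≤ ‖z‖ + ‖z⁻¹‖ := norm_add_le _ _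
        _ = 2 := by rw [norm_inv, hnorm]; norm_num
    refine ⟨k, ?_, ?_⟩
    · rw [norm_intCast] at hbound
      exact_mod_cast hbound
    · rw [← hk]
      field_simp
  · rintro ⟨k, -, hk⟩
    exact ⟨k, by field_simp; linear_combination hk⟩

theorem ofReal_norm_two_mul_sq_add_inv_pow_four_sq {a : ℂ} (ha : ‖a‖ = 1) :
    ((‖2 * a ^ 2 + a⁻¹ ^ 4‖ ^ 2 : ℝ) : ℂ) = 5 + 2 * (a ^ 6 + a⁻¹ ^ 6) := by
  have ha₀ : a ≠ 0 := norm_ne_zero_iff.mp (by simp [ha])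
  rw [Complex.sq_norm, ← mul_conj]
  simp only [map_add, map_mul, map_pow, map_inv₀, map_ofNat, ← inv_eq_conj ha, inv_inv]
  field_simp
  ring

theorem exists_int_ofReal_eq_iff_of_eq_add_mul {r : ℝ} {w : ℂ} (hw : IsIntegral ℤ w)
    {c d : ℤ} (hd : d ≠ 0) (h : (r : ℂ) = c + d * w) : (∃ m : ℤ, r = m) ↔ ∃ k : ℤ, w = k := by
  constructor
  · rintro ⟨m, rfl⟩
    refine hw.exists_int_iff_exists_rat.mp ⟨(m - c) / d, ?_⟩
    push_cast at h ⊢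
    field_simp
    linear_combination -h
  · rintro ⟨k, rfl⟩
    exact ⟨c + d * k, by exact_mod_cast h⟩

end Complex

theorem statement3 (a b c : ℂ) (ha : ∃ n : ℕ, 0 < n ∧ a ^ n = 1)
    (hb : b = -a) (hc : c = -(a⁻¹ ^ 2)) :
    (((‖a ^ 2 + b ^ 2 + c ^ 2‖) ^ 2 : ℝ) : ℂ) = 5 + 2 * (a ^ 6 + a⁻¹ ^ 6) ∧
    ((∃ m : ℤ, (‖a ^ 2 + b ^ 2 + c ^ 2‖) ^ 2 = (m : ℝ)) ↔
      (a ^ 24 = 1 ∨ a ^ 36 = 1)) ∧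
    ((a ^ 24 = 1 ∨ a ^ 36 = 1) ↔ (orderOf (a ^ 6) ∣ 4 ∨ orderOf (a ^ 6) ∣ 6)) := by
  obtain ⟨n, hn, han⟩ := ha
  have hsq := Complex.ofReal_norm_two_mul_sq_add_inv_pow_four_sq
    (Complex.norm_eq_one_of_pow_eq_one han hn.ne')
  rw [show 2 * a ^ 2 + a⁻¹ ^ 4 = a ^ 2 + b ^ 2 + c ^ 2 by subst hb hc; ring] at hsq
  have hz : (a ^ 6) ^ n = 1 := by rw [← pow_mul, mul_comm, pow_mul, han, one_pow]
  have hpow : a ^ 24 = (a ^ 6) ^ 4 ∧ a ^ 36 = (a ^ 6) ^ 6 := by constructor <;> rw [← pow_mul]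
  rw [hpow.1, hpow.2, ← Complex.exists_int_eq_add_inv_iff hn hz]
  refine ⟨hsq, ?_, ?_⟩
  · rw [inv_pow] at hsq
    exact_mod_cast Complex.exists_int_ofReal_eq_iff_of_eq_add_mul
      (isIntegral_add_inv_of_pow_eq_one hn hz) (c := 5) (d := 2) two_ne_zero hsq
  · rw [Complex.exists_int_eq_add_inv_iff hn hz, orderOf_dvd_iff_pow_eq_one,
      orderOf_dvd_iff_pow_eq_one]
end

section
/- The centralizer of ι(U(3)) in USp(6) equals U(1)₃ (which is contained in ι(U(3))), and the normalizer of ι(U(3)) in USp(6) equals the union ι(U(3)) ∪ J·ι(U(3)); in particular the normalizer of ι(U(3)) contains ι(U(3)) as a subgroup of index 2. -/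
noncomputable section

open Matrix

abbrev M6 := Matrix (Fin 3 ⊕ Fin 3) (Fin 3 ⊕ Fin 3) ℂ

/-- The matrix J = [[0, I₃], [−I₃, 0]]. -/
def J6 : M6 := Matrix.fromBlocks 0 1 (-1) 0

/-- USp(6): the set of 6×6 complex matrices that are unitary and satisfy Aᵀ·J·A = J. -/
def USp6set : Set M6 :=
  {A | A ∈ Matrix.unitaryGroup (Fin 3 ⊕ Fin 3) ℂ ∧ Aᵀ * J6 * A = J6}

/-- ι(A) = diag(A, conj(A)). -/
def iotaM (A : Matrix (Fin 3) (Fin 3) ℂ) : M6 :=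
  Matrix.fromBlocks A 0 0 (A.map (starRingEnd ℂ))

/-- ι(U(3)) : the image of the 3×3 unitary group under ι. -/
def iotaU3 : Set M6 :=
  {M | ∃ A ∈ Matrix.unitaryGroup (Fin 3) ℂ, M = iotaM A}

/-- U(1)₃ = {diag(u·I₃, conj(u)·I₃) : |u| = 1}. -/
def U13 : Set M6 :=
  {M | ∃ u : ℂ, ‖u‖ = 1 ∧
    M = Matrix.fromBlocks (u • 1) 0 0 ((starRingEnd ℂ u) • 1)}

/-!
An element of USp(6) commuting with ι(i·I₃) = diag(i·I₃, −i·I₃) is block diagonal, diag(P, S),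
and the unitary and symplectic conditions force P ∈ U(3) and S = conj P, so it lies in ι(U(3)).
Since the unitary matrices span all matrices, only scalars commute with U(3); this gives the
centralizer.

If g normalizes ι(U(3)), then g ι(i·I₃) g⁻¹ is central in ι(U(3)), hence scalar, and squares to
−1, so it is ±ι(i·I₃). In the + case g commutes with ι(i·I₃); in the − case J·g does, because J
anticommutes with ι(i·I₃). Conversely, conjugation by J maps ι(A) to ι(conj A).
-/

namespace Matrix

variable {l m : Type*} [Fintype l] [DecidableEq l] [Fintype m] [DecidableEq m]

theorem fromBlocks_diag_mem_unitaryGroup_iff {α : Type*} [CommRing α] [StarRing α]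
    {A : Matrix l l α} {D : Matrix m m α} :
    fromBlocks A 0 0 D ∈ unitaryGroup (l ⊕ m) α ↔
      A ∈ unitaryGroup l α ∧ D ∈ unitaryGroup m α := by
  simp [mem_unitaryGroup_iff, star_eq_conjTranspose, fromBlocks_conjTranspose,
    fromBlocks_multiply, ← fromBlocks_one]

theorem fromBlocks_diag_mem_symplecticGroup_iff {R : Type*} [CommRing R] {A D : Matrix l l R} :
    fromBlocks A 0 0 D ∈ symplecticGroup l R ↔ Aᵀ * D = 1 := by
  simp [SymplecticGroup.fromBlocks_mem_iff]

theorem eq_fromBlocks_of_commute {K : Type*} [Field K] {c d : K} (hcd : c ≠ d)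
    {g : Matrix (l ⊕ m) (l ⊕ m) K} (h : Commute g (fromBlocks (c • 1) 0 0 (d • 1))) :
    g = fromBlocks g.toBlocks₁₁ 0 0 g.toBlocks₂₂ := by
  have hsub : c - d ≠ 0 := sub_ne_zero.2 hcd
  rw [Commute, SemiconjBy] at h
  conv at h => rw [← fromBlocks_toBlocks g]
  simp only [fromBlocks_multiply, fromBlocks_inj, Matrix.mul_zero, Matrix.zero_mul, add_zero,
    zero_add, Matrix.mul_smul, smul_mul, Matrix.mul_one, Matrix.one_mul] at h
  obtain ⟨-, h₁₂, h₂₁, -⟩ := h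
  have e₁₂ : (c - d) • g.toBlocks₁₂ = 0 := by rw [sub_smul, h₁₂, sub_self]
  have e₂₁ : (c - d) • g.toBlocks₂₁ = 0 := by rw [sub_smul, h₂₁, sub_self]
  rw [← (smul_eq_zero_iff_right hsub).1 e₁₂, ← (smul_eq_zero_iff_right hsub).1 e₂₁,
    fromBlocks_toBlocks]

open scoped Matrix.Norms.L2Operator in
theorem exists_eq_smul_one_of_forall_commute_unitary {P : Matrix l l ℂ}
    (h : ∀ U ∈ unitaryGroup l ℂ, Commute P U) : ∃ c : ℂ, P = c • 1 := by
  have hall : ∀ X, Commute P X := by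
    have : (⊤ : Submodule ℂ (Matrix l l ℂ)) ≤ (Subalgebra.centralizer ℂ {P}).toSubmodule := by
      rw [← CStarAlgebra.span_unitary, Submodule.span_le]
      intro U hU
      exact (Subalgebra.mem_centralizer_iff ℂ).2 fun _ hQ => (Set.mem_singleton_iff.1 hQ) ▸ h U hU
    exact fun X => (Subalgebra.mem_centralizer_iff ℂ).1 (this Submodule.mem_top) P rfl
  obtain ⟨c, hc⟩ := mem_range_scalar_iff_commute_single'.2 fun i j => (hall _).symm
  exact ⟨c, by rw [← hc, smul_one_eq_diagonal, scalar_apply]⟩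

theorem smul_one_mem_unitaryGroup_iff [Nonempty l] {c : ℂ} :
    c • (1 : Matrix l l ℂ) ∈ unitaryGroup l ℂ ↔ ‖c‖ = 1 := by
  rw [mem_unitaryGroup_iff, star_smul, star_one, smul_mul_smul_comm, one_mul,
    (smul_left_injective ℂ one_ne_zero).eq_iff' (one_smul ℂ 1),
    show star c = (starRingEnd ℂ) c from rfl, Complex.mul_conj']
  exact_mod_cast pow_eq_one_iff_of_nonneg (norm_nonneg c) two_ne_zero

theorem transpose_mul_map_star {α : Type*} [CommRing α] [StarRing α] {A : Matrix l l α}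
    (hA : A ∈ unitaryGroup l α) : Aᵀ * A.map star = 1 := by
  rw [← conjTranspose_transpose, ← transpose_mul, ← star_eq_conjTranspose,
    mem_unitaryGroup_iff'.1 hA, transpose_one]

theorem map_star_mul_transpose {α : Type*} [CommRing α] [StarRing α] {A : Matrix l l α}
    (hA : A ∈ unitaryGroup l α) : A.map star * Aᵀ = 1 := by
  rw [← conjTranspose_transpose, ← transpose_mul, ← star_eq_conjTranspose,
    mem_unitaryGroup_iff.1 hA, transpose_one]

theorem image_conj_mul {α : Type*} [CommRing α] (g h : Matrix l l α) (S : Set (Matrix l l α)) :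
    (fun x => g * h * x * (g * h)⁻¹) '' S =
      (fun x => g * x * g⁻¹) '' ((fun x => h * x * h⁻¹) '' S) := by
  rw [Set.image_image, mul_inv_rev]
  simp only [mul_assoc]

end Matrix

theorem Set.setOf_exists_mem_eq_image {α β : Type*} (f : α → β) (S : Set α) :
    {y | ∃ x ∈ S, y = f x} = f '' S := by
  ext
  simp [eq_comm]

local notation "U₃" => unitaryGroup (Fin 3) ℂ

theorem iotaM_eq_fromBlocks (A : Matrix (Fin 3) (Fin 3) ℂ) :
    iotaM A = fromBlocks A 0 0 (A.map star) := rfl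

theorem iotaM_mul (A B : Matrix (Fin 3) (Fin 3) ℂ) : iotaM A * iotaM B = iotaM (A * B) := by
  simp [iotaM_eq_fromBlocks, fromBlocks_multiply, Matrix.map_mul]

theorem iotaM_one : iotaM 1 = 1 := by
  simp [iotaM_eq_fromBlocks, fromBlocks_one]

theorem iotaM_neg (A : Matrix (Fin 3) (Fin 3) ℂ) : iotaM (-A) = -iotaM A := by
  ext (i | i) (j | j) <;> simp [iotaM]

theorem iotaM_injective : Function.Injective iotaM := fun A B h => by
  simpa [iotaM] using congrArg toBlocks₁₁ h

theorem iotaM_smul_one (u : ℂ) :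
    iotaM (u • 1) = fromBlocks (u • 1) 0 0 (starRingEnd ℂ u • 1) := by
  rw [iotaM, smul_one_eq_diagonal, smul_one_eq_diagonal, diagonal_map (map_zero _)]

theorem inv_iotaM {A : Matrix (Fin 3) (Fin 3) ℂ} (hA : A ∈ U₃) : (iotaM A)⁻¹ = iotaM (star A) :=
  inv_eq_left_inv (by rw [iotaM_mul, Unitary.star_mul_self_of_mem hA, iotaM_one])

theorem iotaU3_eq_image : iotaU3 = iotaM '' U₃ := by
  ext
  simp [iotaU3, eq_comm]

theorem J6_eq_neg_J : J6 = -J (Fin 3) ℂ := by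
  simp [J6, J, fromBlocks_neg]

theorem J6_mul_self : J6 * J6 = -1 := by
  rw [J6_eq_neg_J, neg_mul_neg, J_squared]

theorem J6_inv : J6⁻¹ = -J6 :=
  inv_eq_left_inv (by rw [neg_mul, J6_mul_self, neg_neg])

theorem mem_USp6set_iff {g : M6} :
    g ∈ USp6set ↔ g ∈ unitaryGroup (Fin 3 ⊕ Fin 3) ℂ ∧ g ∈ symplecticGroup (Fin 3) ℂ := by
  rw [USp6set, Set.mem_ofPred_eq, SymplecticGroup.mem_iff', J6_eq_neg_J, mul_neg, neg_mul, neg_inj]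

theorem USp6set_mul_mem {g h : M6} (hg : g ∈ USp6set) (hh : h ∈ USp6set) : g * h ∈ USp6set := by
  rw [mem_USp6set_iff] at *
  exact ⟨mul_mem hg.1 hh.1, mul_mem hg.2 hh.2⟩

theorem inv_mul_of_mem_USp6set {g : M6} (hg : g ∈ USp6set) : g⁻¹ * g = 1 := by
  rw [inv_eq_left_inv (Unitary.star_mul_self_of_mem hg.1), Unitary.star_mul_self_of_mem hg.1]

theorem mul_inv_of_mem_USp6set {g : M6} (hg : g ∈ USp6set) : g * g⁻¹ = 1 := by
  rw [inv_eq_left_inv (Unitary.star_mul_self_of_mem hg.1), Unitary.mul_star_self_of_mem hg.1]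

theorem J6_mem_USp6set : J6 ∈ USp6set := by
  refine mem_USp6set_iff.2 ⟨?_, J6_eq_neg_J ▸ SymplecticGroup.neg_mem (SymplecticGroup.J_mem _ _)⟩
  rw [mem_unitaryGroup_iff, star_eq_conjTranspose]
  simp [J6, fromBlocks_conjTranspose, fromBlocks_multiply, ← fromBlocks_one]

theorem iotaM_mem_USp6set {A : Matrix (Fin 3) (Fin 3) ℂ} (hA : A ∈ U₃) : iotaM A ∈ USp6set := by
  rw [mem_USp6set_iff, iotaM_eq_fromBlocks, fromBlocks_diag_mem_unitaryGroup_iff,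
    map_star_mem_unitaryGroup_iff, fromBlocks_diag_mem_symplecticGroup_iff]
  exact ⟨⟨hA, hA⟩, transpose_mul_map_star hA⟩

theorem fromBlocks_mem_iotaU3_of_mem_USp6set {P S : Matrix (Fin 3) (Fin 3) ℂ}
    (h : fromBlocks P 0 0 S ∈ USp6set) : fromBlocks P 0 0 S ∈ iotaU3 := by
  rw [mem_USp6set_iff, fromBlocks_diag_mem_unitaryGroup_iff,
    fromBlocks_diag_mem_symplecticGroup_iff] at h
  obtain ⟨⟨hP, -⟩, hPS⟩ := h
  exact ⟨P, hP, by rw [iotaM_eq_fromBlocks, left_inv_eq_right_inv (map_star_mul_transpose hP) hPS]⟩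

theorem J6_not_mem_iotaU3 : J6 ∉ iotaU3 := by
  rintro ⟨A, -, hJ⟩
  simpa [J6, iotaM] using congrFun (congrFun hJ (Sum.inl 0)) (Sum.inr 0)

def iotaI : M6 := iotaM (Complex.I • 1)

theorem iotaI_mem_iotaU3 : iotaI ∈ iotaU3 :=
  ⟨_, (smul_one_mem_unitaryGroup_iff (l := Fin 3)).2 (by simp), rfl⟩

theorem commute_iotaI_iotaM (B : Matrix (Fin 3) (Fin 3) ℂ) : Commute iotaI (iotaM B) := by
  rw [iotaI, Commute, SemiconjBy, iotaM_mul, iotaM_mul, smul_one_mul, mul_smul_one]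

theorem iotaI_mul_self : iotaI * iotaI = -1 := by
  rw [iotaI, iotaM_mul, smul_mul_smul_comm, Complex.I_mul_I, one_mul, neg_one_smul, iotaM_neg,
    iotaM_one]

theorem J6_mul_iotaI : J6 * iotaI = -(iotaI * J6) := by
  simp [J6, iotaI, iotaM_smul_one, fromBlocks_multiply, fromBlocks_neg]

theorem mem_iotaU3_of_commute_iotaI {g : M6} (hg : g ∈ USp6set) (h : Commute g iotaI) :
    g ∈ iotaU3 := by
  rw [iotaI, iotaM_smul_one] at h
  rw [eq_fromBlocks_of_commute (by norm_num [Complex.ext_iff]) h] at hg ⊢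
  exact fromBlocks_mem_iotaU3_of_mem_USp6set hg

theorem exists_eq_smul_one_of_forall_commute_iotaM {A : Matrix (Fin 3) (Fin 3) ℂ}
    (h : ∀ B ∈ U₃, Commute (iotaM A) (iotaM B)) : ∃ c : ℂ, A = c • 1 :=
  exists_eq_smul_one_of_forall_commute_unitary fun B hB =>
    iotaM_injective (by rw [← iotaM_mul, ← iotaM_mul]; exact h B hB)

theorem mem_U13_iff {M : M6} : M ∈ U13 ↔ ∃ u : ℂ, ‖u‖ = 1 ∧ M = iotaM (u • 1) := by
  simp only [U13, iotaM_smul_one, Set.mem_ofPred_eq]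

theorem centralizer_iotaU3 : {g ∈ USp6set | ∀ x ∈ iotaU3, g * x = x * g} = U13 := by
  ext g
  rw [Set.mem_sep_iff, mem_U13_iff]
  constructor
  · rintro ⟨hg, hcomm⟩
    obtain ⟨A, hA, rfl⟩ := mem_iotaU3_of_commute_iotaI hg (hcomm _ iotaI_mem_iotaU3)
    obtain ⟨c, rfl⟩ := exists_eq_smul_one_of_forall_commute_iotaM fun B hB => hcomm _ ⟨B, hB, rfl⟩
    exact ⟨c, smul_one_mem_unitaryGroup_iff.1 hA, rfl⟩
  · rintro ⟨u, hu, rfl⟩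
    refine ⟨iotaM_mem_USp6set (smul_one_mem_unitaryGroup_iff.2 hu), ?_⟩
    rintro _ ⟨B, -, rfl⟩
    rw [iotaM_mul, iotaM_mul, smul_one_mul, mul_smul_one]

theorem U13_subset_iotaU3 : U13 ⊆ iotaU3 := fun M hM => by
  obtain ⟨u, hu, rfl⟩ := mem_U13_iff.1 hM
  exact ⟨_, smul_one_mem_unitaryGroup_iff.2 hu, rfl⟩

theorem image_conj_iotaU3_eq {g : M6} {f : Matrix (Fin 3) (Fin 3) ℂ → Matrix (Fin 3) (Fin 3) ℂ}
    (hmaps : Set.MapsTo f U₃ U₃) (hsurj : Set.SurjOn f U₃ U₃)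
    (hg : ∀ B, g * iotaM B * g⁻¹ = iotaM (f B)) :
    (fun x => g * x * g⁻¹) '' iotaU3 = iotaU3 := by
  rw [iotaU3_eq_image, Set.image_image, funext hg, ← Set.image_image iotaM f,
    hsurj.image_eq_of_mapsTo hmaps]

theorem image_conj_iotaM_iotaU3 {A : Matrix (Fin 3) (Fin 3) ℂ} (hA : A ∈ U₃) :
    (fun x => iotaM A * x * (iotaM A)⁻¹) '' iotaU3 = iotaU3 :=
  image_conj_iotaU3_eq (f := fun B => A * B * star A)
    (fun _ hB => mul_mem (mul_mem hA hB) (Unitary.star_mem hA))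
    (fun C hC => ⟨star A * C * A, mul_mem (mul_mem (Unitary.star_mem hA) hC) hA, by
      simp only [← mul_assoc, Unitary.mul_star_self_of_mem hA, one_mul]
      simp only [mul_assoc, Unitary.mul_star_self_of_mem hA, mul_one]⟩)
    (fun B => by rw [inv_iotaM hA, iotaM_mul, iotaM_mul])

theorem J6_conj_iotaM (B : Matrix (Fin 3) (Fin 3) ℂ) :
    J6 * iotaM B * J6⁻¹ = iotaM (B.map star) := by
  rw [J6_inv]
  simp [J6, iotaM_eq_fromBlocks, fromBlocks_multiply, fromBlocks_neg, Function.comp_def]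

theorem image_conj_J6_iotaU3 : (fun x => J6 * x * J6⁻¹) '' iotaU3 = iotaU3 :=
  image_conj_iotaU3_eq (fun _ hB => map_star_mem_unitaryGroup_iff.2 hB)
    (fun C hC => ⟨C.map star, map_star_mem_unitaryGroup_iff.2 hC, by ext; simp⟩) J6_conj_iotaM

theorem conj_iotaI_eq_or {g : M6} (hg : g ∈ USp6set)
    (h : (fun x => g * x * g⁻¹) '' iotaU3 = iotaU3) :
    g * iotaI * g⁻¹ = iotaI ∨ g * iotaI * g⁻¹ = -iotaI := by
  have hconj : ∀ x y, g * x * g⁻¹ * (g * y * g⁻¹) = g * (x * y) * g⁻¹ := fun x y => by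
    simp only [mul_assoc, ← mul_assoc g⁻¹ g, inv_mul_of_mem_USp6set hg, one_mul]
  obtain ⟨A, -, hgA⟩ : g * iotaI * g⁻¹ ∈ iotaU3 := h ▸ Set.mem_image_of_mem _ iotaI_mem_iotaU3
  obtain ⟨c, rfl⟩ := exists_eq_smul_one_of_forall_commute_iotaM (A := A) fun B hB => by
    obtain ⟨_, ⟨B', -, rfl⟩, hB'⟩ : iotaM B ∈ (fun x => g * x * g⁻¹) '' iotaU3 :=
      h.symm ▸ ⟨B, hB, rfl⟩
    rw [← hgA, ← hB', Commute, SemiconjBy, hconj, hconj, (commute_iotaI_iotaM B').eq]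
  have hc : c * c = -1 := by
    have hsq : iotaM ((c * c) • 1) = -1 := by
      rw [← smul_smul, ← smul_one_mul, ← iotaM_mul, ← hgA, hconj, iotaI_mul_self, mul_neg_one,
        neg_mul, mul_inv_of_mem_USp6set hg]
    simpa [iotaM] using congrFun (congrFun hsq (Sum.inl 0)) (Sum.inl 0)
  have hroots : (c - Complex.I) * (c + Complex.I) = 0 := by
    linear_combination hc - Complex.I_sq
  rcases mul_eq_zero.1 hroots with hI | hI
  · left
    rw [hgA, sub_eq_zero.1 hI, iotaI]
  · right
    rw [hgA, eq_neg_of_add_eq_zero_left hI, neg_smul, iotaM_neg, iotaI]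

theorem mem_iotaU3_or_J6_mul_of_normalizes {g : M6} (hg : g ∈ USp6set)
    (h : (fun x => g * x * g⁻¹) '' iotaU3 = iotaU3) :
    g ∈ iotaU3 ∪ (fun M => J6 * M) '' iotaU3 := by
  have hconj_mul : ∀ w, g * iotaI * g⁻¹ = w → g * iotaI = w * g := fun w hw => by
    rw [← hw, mul_assoc _ g⁻¹, inv_mul_of_mem_USp6set hg, mul_one]
  rcases conj_iotaI_eq_or hg h with hz | hz
  · exact Or.inl (mem_iotaU3_of_commute_iotaI hg (hconj_mul _ hz))
  · have hJg : Commute (J6 * g) iotaI := by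
      rw [Commute, SemiconjBy, mul_assoc, hconj_mul _ hz, neg_mul, mul_neg, ← mul_assoc,
        J6_mul_iotaI, neg_mul, neg_neg, mul_assoc]
    obtain ⟨P, hP, hJP⟩ := mem_iotaU3_of_commute_iotaI (USp6set_mul_mem J6_mem_USp6set hg) hJg
    have hnegP : -P ∈ U₃ := by
      rw [mem_unitaryGroup_iff, star_neg, neg_mul_neg]
      exact mem_unitaryGroup_iff.1 hP
    refine Or.inr ⟨iotaM (-P), ⟨-P, hnegP, rfl⟩, ?_⟩
    change J6 * iotaM (-P) = g
    rw [iotaM_neg, ← hJP, mul_neg, ← mul_assoc, J6_mul_self, neg_one_mul, neg_neg]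

theorem normalizer_iotaU3 :
    {g ∈ USp6set | {y | ∃ x ∈ iotaU3, y = g * x * g⁻¹} = iotaU3} =
      iotaU3 ∪ (fun M => J6 * M) '' iotaU3 := by
  ext g
  rw [Set.mem_sep_iff, Set.setOf_exists_mem_eq_image (fun x => g * x * g⁻¹)]
  constructor
  · exact fun ⟨hg, h⟩ => mem_iotaU3_or_J6_mul_of_normalizes hg h
  · rintro (⟨A, hA, rfl⟩ | ⟨_, ⟨A, hA, rfl⟩, rfl⟩)
    · exact ⟨iotaM_mem_USp6set hA, image_conj_iotaM_iotaU3 hA⟩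
    · refine ⟨USp6set_mul_mem J6_mem_USp6set (iotaM_mem_USp6set hA), ?_⟩
      rw [image_conj_mul, image_conj_iotaM_iotaU3 hA, image_conj_J6_iotaU3]

theorem statement16 :
    {g ∈ USp6set | ∀ x ∈ iotaU3, g * x = x * g} = U13 ∧
    U13 ⊆ iotaU3 ∧
    {g ∈ USp6set | {y | ∃ x ∈ iotaU3, y = g * x * g⁻¹} = iotaU3} =
      iotaU3 ∪ (fun M => J6 * M) '' iotaU3 ∧
    J6 ∉ iotaU3 :=
  ⟨centralizer_iotaU3, U13_subset_iotaU3, normalizer_iotaU3, J6_not_mem_iotaU3⟩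
end
end
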